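/- arXiv:cs/0610051 — 4 statements merged into one kernel-verified Lean document; each statement's English description precedes it below -/
import Mathlib

section
/- Let I be a bi-homogeneous ideal of R such that neither X₀ nor ℓ₀ is a zero-divisor in R/I, and let I′ = (I + ⟨X₀−1, ℓ₀−1⟩) ∩ ℚ[X₁,…,Xₙ,ℓ₁,…,ℓ_k]. Then for all (i,j), the bi-homogenization map φ_{i,j} sends I′_{≤i,≤j} onto I_{i,j}; that is, φ_{i,j}(I′_{≤i,≤j}) = I_{i,j}. -/
open MvPolynomial

noncomputable section

abbrev Rvars (n k : ℕ) := Fin (n+1) ⊕ Fin (k+1)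

def bw (n k : ℕ) : Rvars n k → ℕ × ℕ := Sum.elim (fun _ => (1,0)) (fun _ => (0,1))

abbrev Rpoly (n k : ℕ) := MvPolynomial (Rvars n k) ℚ

def IsBihom (n k : ℕ) (I : Ideal (Rpoly n k)) : Prop :=
  ∀ f ∈ I, ∀ d : ℕ × ℕ, weightedHomogeneousComponent (bw n k) d f ∈ I

def Hcoeff (n k : ℕ) (I : Ideal (Rpoly n k)) (d : ℕ × ℕ) : ℕ :=
  Module.finrank ℚ
    ((weightedHomogeneousSubmodule ℚ (bw n k) d) ⧸
      (Submodule.comap (weightedHomogeneousSubmodule ℚ (bw n k) d).subtype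
        (Submodule.restrictScalars ℚ I)))

def Hseries (n k : ℕ) (I : Ideal (Rpoly n k)) : MvPowerSeries (Fin 2) ℤ :=
  fun d => (Hcoeff n k I (d 0, d 1) : ℤ)

abbrev Rvars' (n k : ℕ) := Fin n ⊕ Fin k

/-- Embedding of the affine variables X₁,…,Xₙ,ℓ₁,…,ℓ_k into X₀,…,Xₙ,ℓ₀,…,ℓ_k. -/
def embedVars (n k : ℕ) : Rvars' n k → Rvars n k := Sum.map Fin.succ Fin.succ

def degXmon (n k : ℕ) (d : Rvars' n k →₀ ℕ) : ℕ := ∑ p : Fin n, d (Sum.inl p)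
def degLmon (n k : ℕ) (d : Rvars' n k →₀ ℕ) : ℕ := ∑ q : Fin k, d (Sum.inr q)

/-- The bi-homogenization φ_{i,j} to bidegree (i,j). -/
def phiH (n k : ℕ) (i j : ℕ) (f : MvPolynomial (Rvars' n k) ℚ) : Rpoly n k :=
  (AddMonoidAlgebra.coeff f).sum fun d c => monomial
    (Finsupp.mapDomain (embedVars n k) d
      + Finsupp.single (Sum.inl 0) (i - degXmon n k d)
      + Finsupp.single (Sum.inr 0) (j - degLmon n k d)) c

/-- weight giving the X-degree of an affine polynomial -/
def wX' (n k : ℕ) : Rvars' n k → ℕ := Sum.elim (fun _ => 1) (fun _ => 0)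
/-- weight giving the ℓ-degree of an affine polynomial -/
def wL' (n k : ℕ) : Rvars' n k → ℕ := Sum.elim (fun _ => 0) (fun _ => 1)

/-!
Write `e` for the dehomogenization `X₀ = ℓ₀ = 1`. For `g ∈ I_{i,j}`, the polynomial `e g` lies in
`I′`, has degrees at most `(i, j)`, and `φ_{i,j} (e g) = g`, since `φ_{i,j}` restores the missing
powers of `X₀` and `ℓ₀` monomial by monomial. Conversely, `f ∈ I′` means `f = e h` with `h ∈ I`;
padding each bi-homogeneous component of `h` (which lies in `I`) with powers of `X₀` and `ℓ₀`
gives `H ∈ I` bi-homogeneous of some bidegree `(i + s, j + t)` with `e H = f`. Then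
`H = φ_{i+s,j+t} f = X₀^s ℓ₀^t φ_{i,j} f`, and as `X₀` and `ℓ₀` are non-zero-divisors modulo `I`,
`φ_{i,j} f ∈ I`.
-/

theorem Ideal.mem_of_pow_mul_mem {R : Type*} [CommSemiring R] {I : Ideal R} {r : R}
    (hr : ∀ g, r * g ∈ I → g ∈ I) (s : ℕ) {g : R} (hg : r ^ s * g ∈ I) : g ∈ I := by
  induction s generalizing g with
  | zero => simpa using hg
  | succ s ih => exact hr g (ih (by rwa [pow_succ, mul_assoc] at hg))

theorem Finsupp.weight_sumElim_one_zero {α β : Type*} [Fintype α] [Fintype β]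
    (d : α ⊕ β →₀ ℕ) :
    Finsupp.weight (Sum.elim (fun _ => 1) (fun _ => 0)) d = ∑ a, d (Sum.inl a) := by
  simp [Finsupp.weight_apply, Finsupp.sum_fintype, Fintype.sum_sum_type]

theorem Finsupp.weight_sumElim_zero_one {α β : Type*} [Fintype α] [Fintype β]
    (d : α ⊕ β →₀ ℕ) :
    Finsupp.weight (Sum.elim (fun _ => 0) (fun _ => 1)) d = ∑ b, d (Sum.inr b) := by
  simp [Finsupp.weight_apply, Finsupp.sum_fintype, Fintype.sum_sum_type]

namespace Bihomogenization

variable {n k : ℕ}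

theorem embedVars_injective : Function.Injective (embedVars n k) :=
  (Fin.succ_injective _).sumMap (Fin.succ_injective _)

theorem embedVars_ne_inl_zero (x : Rvars' n k) : embedVars n k x ≠ Sum.inl 0 := by
  cases x <;> simp [embedVars, Fin.succ_ne_zero]

theorem embedVars_ne_inr_zero (x : Rvars' n k) : embedVars n k x ≠ Sum.inr 0 := by
  cases x <;> simp [embedVars, Fin.succ_ne_zero]

theorem degXmon_eq_weight (d : Rvars' n k →₀ ℕ) :
    degXmon n k d = Finsupp.weight (wX' n k) d :=
  (Finsupp.weight_sumElim_one_zero d).symm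

theorem degLmon_eq_weight (d : Rvars' n k →₀ ℕ) :
    degLmon n k d = Finsupp.weight (wL' n k) d :=
  (Finsupp.weight_sumElim_zero_one d).symm

theorem degXmon_le_of_weightedTotalDegree_le {i : ℕ} {f : MvPolynomial (Rvars' n k) ℚ}
    (h : weightedTotalDegree (wX' n k) f ≤ i) {d : Rvars' n k →₀ ℕ} (hd : d ∈ f.support) :
    degXmon n k d ≤ i :=
  degXmon_eq_weight d ▸ (le_weightedTotalDegree _ hd).trans h

theorem degLmon_le_of_weightedTotalDegree_le {j : ℕ} {f : MvPolynomial (Rvars' n k) ℚ}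
    (h : weightedTotalDegree (wL' n k) f ≤ j) {d : Rvars' n k →₀ ℕ} (hd : d ∈ f.support) :
    degLmon n k d ≤ j :=
  degLmon_eq_weight d ▸ (le_weightedTotalDegree _ hd).trans h

def homExp (i j : ℕ) (d : Rvars' n k →₀ ℕ) : Rvars n k →₀ ℕ :=
  Finsupp.mapDomain (embedVars n k) d
    + Finsupp.single (Sum.inl 0) (i - degXmon n k d)
    + Finsupp.single (Sum.inr 0) (j - degLmon n k d)

def affExp (D : Rvars n k →₀ ℕ) : Rvars' n k →₀ ℕ :=
  Finsupp.equivFunOnFinite.symm fun x => D (embedVars n k x)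

@[simp]
theorem affExp_apply (D : Rvars n k →₀ ℕ) (x : Rvars' n k) :
    affExp D x = D (embedVars n k x) :=
  rfl

@[simp]
theorem homExp_apply_embedVars (i j : ℕ) (d : Rvars' n k →₀ ℕ) (x : Rvars' n k) :
    homExp i j d (embedVars n k x) = d x := by
  rw [homExp, Finsupp.add_apply, Finsupp.add_apply, Finsupp.mapDomain_apply embedVars_injective,
    Finsupp.single_eq_of_ne (embedVars_ne_inl_zero x),
    Finsupp.single_eq_of_ne (embedVars_ne_inr_zero x), add_zero, add_zero]

@[simp]
theorem homExp_apply_inl_zero (i j : ℕ) (d : Rvars' n k →₀ ℕ) :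
    homExp i j d (Sum.inl 0) = i - degXmon n k d := by
  simp [homExp, Finsupp.mapDomain_of_notMem_range _ _ fun ⟨x, hx⟩ =>
    embedVars_ne_inl_zero (n := n) (k := k) x hx]

@[simp]
theorem homExp_apply_inr_zero (i j : ℕ) (d : Rvars' n k →₀ ℕ) :
    homExp i j d (Sum.inr 0) = j - degLmon n k d := by
  simp [homExp, Finsupp.mapDomain_of_notMem_range _ _ fun ⟨x, hx⟩ =>
    embedVars_ne_inr_zero (n := n) (k := k) x hx]

@[simp]
theorem affExp_homExp (i j : ℕ) (d : Rvars' n k →₀ ℕ) : affExp (homExp i j d) = d := by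
  ext x; simp

theorem weight_bw (D : Rvars n k →₀ ℕ) :
    Finsupp.weight (bw n k) D =
      (D (Sum.inl 0) + degXmon n k (affExp D), D (Sum.inr 0) + degLmon n k (affExp D)) := by
  simp [Finsupp.weight_apply, Finsupp.sum_fintype, Fintype.sum_sum_type, Fin.sum_univ_succ, bw,
    degXmon, degLmon, embedVars, Prod.ext_iff, Prod.fst_sum, Prod.snd_sum]

theorem weight_homExp {i j : ℕ} {d : Rvars' n k →₀ ℕ} (hi : degXmon n k d ≤ i)
    (hj : degLmon n k d ≤ j) : Finsupp.weight (bw n k) (homExp i j d) = (i, j) := by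
  rw [weight_bw, affExp_homExp, homExp_apply_inl_zero, homExp_apply_inr_zero,
    Nat.sub_add_cancel hi, Nat.sub_add_cancel hj]

theorem homExp_affExp {i j : ℕ} {D : Rvars n k →₀ ℕ}
    (hD : Finsupp.weight (bw n k) D = (i, j)) :
    homExp i j (affExp D) = D := by
  rw [weight_bw, Prod.ext_iff] at hD
  ext (p | q)
  · cases p using Fin.cases with
    | zero => simp only [homExp_apply_inl_zero]; omega
    | succ p => exact homExp_apply_embedVars i j _ (Sum.inl p)
  · cases q using Fin.cases with
    | zero => simp only [homExp_apply_inr_zero]; omega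
    | succ q => exact homExp_apply_embedVars i j _ (Sum.inr q)

theorem phiH_monomial (i j : ℕ) (d : Rvars' n k →₀ ℕ) (c : ℚ) :
    phiH n k i j (monomial d c) = monomial (homExp i j d) c := by
  rw [phiH, ← single_eq_monomial, AddMonoidAlgebra.coeff_single, Finsupp.sum_single_index]
  · rfl
  · simp

def phiHAddMonoidHom (n k i j : ℕ) : MvPolynomial (Rvars' n k) ℚ →+ Rpoly n k where
  toFun := phiH n k i j
  map_zero' := by simp [phiH]
  map_add' p q := Finsupp.sum_add_index (fun _ _ => by simp) fun _ _ _ _ => by rw [map_add]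

theorem phiH_sum {ι : Type*} (s : Finset ι) (f : ι → MvPolynomial (Rvars' n k) ℚ)
    (i j : ℕ) :
    phiH n k i j (∑ a ∈ s, f a) = ∑ a ∈ s, phiH n k i j (f a) :=
  map_sum (phiHAddMonoidHom n k i j) f s

theorem phiH_eq_sum (i j : ℕ) (f : MvPolynomial (Rvars' n k) ℚ) :
    phiH n k i j f = ∑ d ∈ f.support, monomial (homExp i j d) (coeff d f) := by
  conv_lhs => rw [f.as_sum]
  simp only [phiH_sum, phiH_monomial]

theorem isWeightedHomogeneous_phiH {i j : ℕ} {f : MvPolynomial (Rvars' n k) ℚ}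
    (hi : weightedTotalDegree (wX' n k) f ≤ i) (hj : weightedTotalDegree (wL' n k) f ≤ j) :
    IsWeightedHomogeneous (bw n k) (phiH n k i j f) (i, j) := by
  rw [← mem_weightedHomogeneousSubmodule, phiH_eq_sum]
  refine Submodule.sum_mem _ fun d hd => isWeightedHomogeneous_monomial _ _ _ ?_
  exact weight_homExp (degXmon_le_of_weightedTotalDegree_le hi hd)
    (degLmon_le_of_weightedTotalDegree_le hj hd)

theorem phiH_add_add {i j : ℕ} {f : MvPolynomial (Rvars' n k) ℚ}
    (hi : weightedTotalDegree (wX' n k) f ≤ i) (hj : weightedTotalDegree (wL' n k) f ≤ j)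
    (s t : ℕ) :
    phiH n k (i + s) (j + t) f = X (Sum.inl 0) ^ s * X (Sum.inr 0) ^ t * phiH n k i j f := by
  rw [phiH_eq_sum, phiH_eq_sum, Finset.mul_sum]
  refine Finset.sum_congr rfl fun d hd => ?_
  have hdi := degXmon_le_of_weightedTotalDegree_le hi hd
  have hdj := degLmon_le_of_weightedTotalDegree_le hj hd
  have hexp : homExp (i + s) (j + t) d =
      Finsupp.single (Sum.inl 0) s + Finsupp.single (Sum.inr 0) t + homExp i j d := by
    ext x
    simp only [homExp, Finsupp.add_apply, Finsupp.single_apply]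
    split_ifs <;> omega
  rw [hexp, X_pow_eq_monomial, X_pow_eq_monomial, monomial_mul, monomial_mul, one_mul, one_mul]

def dehomVal (n k : ℕ) : Rvars n k → MvPolynomial (Rvars' n k) ℚ :=
  Sum.elim (Fin.cases 1 fun p => X (Sum.inl p)) (Fin.cases 1 fun q => X (Sum.inr q))

def dehom (n k : ℕ) : Rpoly n k →ₐ[ℚ] MvPolynomial (Rvars' n k) ℚ := aeval (dehomVal n k)

@[simp]
theorem dehom_X_inl_zero : dehom n k (X (Sum.inl 0)) = 1 := aeval_X _ _

@[simp]
theorem dehom_X_inr_zero : dehom n k (X (Sum.inr 0)) = 1 := aeval_X _ _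

@[simp]
theorem dehom_X_embedVars (x : Rvars' n k) : dehom n k (X (embedVars n k x)) = X x := by
  cases x <;> simp [dehom, dehomVal, embedVars]

theorem dehom_rename (f : MvPolynomial (Rvars' n k) ℚ) :
    dehom n k (rename (embedVars n k) f) = f := by
  induction f using MvPolynomial.induction_on with
  | C c => simp
  | add p q hp hq => rw [map_add, map_add, hp, hq]
  | mul_X p x hp => rw [map_mul, map_mul, hp, rename_X, dehom_X_embedVars]

theorem dehom_monomial (D : Rvars n k →₀ ℕ) (c : ℚ) :
    dehom n k (monomial D c) = monomial (affExp D) c := by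
  rw [dehom, aeval_monomial, monomial_eq, Finsupp.prod_fintype _ _ fun _ => pow_zero _,
    Finsupp.prod_fintype _ _ fun _ => pow_zero _]
  simp [Fintype.prod_sum_type, Fin.prod_univ_succ, dehomVal, embedVars]

theorem support_dehom_subset (g : Rpoly n k) :
    (dehom n k g).support ⊆ g.support.image affExp := by
  classical
  conv_lhs => rw [g.as_sum, map_sum]
  refine support_sum.trans (Finset.biUnion_subset.2 fun D hD => ?_)
  rw [dehom_monomial]
  exact support_monomial_subset.trans (Finset.singleton_subset_iff.2 (Finset.mem_image_of_mem _ hD))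

theorem weightedTotalDegree_dehom_le {i j : ℕ} {g : Rpoly n k}
    (hg : IsWeightedHomogeneous (bw n k) g (i, j)) :
    weightedTotalDegree (wX' n k) (dehom n k g) ≤ i ∧
      weightedTotalDegree (wL' n k) (dehom n k g) ≤ j := by
  have hdeg : ∀ d ∈ (dehom n k g).support, degXmon n k d ≤ i ∧ degLmon n k d ≤ j := by
    intro d hd
    obtain ⟨D, hD, rfl⟩ := Finset.mem_image.1 (support_dehom_subset g hd)
    have hw := hg (mem_support_iff.1 hD)
    rw [weight_bw, Prod.ext_iff] at hw
    omega
  exact ⟨Finset.sup_le fun d hd => degXmon_eq_weight d ▸ (hdeg d hd).1,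
    Finset.sup_le fun d hd => degLmon_eq_weight d ▸ (hdeg d hd).2⟩

theorem phiH_dehom {i j : ℕ} {g : Rpoly n k} (hg : IsWeightedHomogeneous (bw n k) g (i, j)) :
    phiH n k i j (dehom n k g) = g := by
  conv_lhs => rw [g.as_sum, map_sum]
  conv_rhs => rw [g.as_sum]
  rw [phiH_sum]
  refine Finset.sum_congr rfl fun D hD => ?_
  rw [dehom_monomial, phiH_monomial, homExp_affExp (hg (mem_support_iff.1 hD))]

abbrev dehomIdeal (n k : ℕ) : Ideal (Rpoly n k) :=
  Ideal.span {(X (Sum.inl 0) : Rpoly n k) - 1, (X (Sum.inr 0) : Rpoly n k) - 1}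

theorem dehomIdeal_le_ker : dehomIdeal n k ≤ RingHom.ker (dehom n k) := by
  rw [Ideal.span_le, Set.insert_subset_iff, Set.singleton_subset_iff]
  simp

theorem X_sub_rename_dehom_X_mem (x : Rvars n k) :
    X x - rename (embedVars n k) (dehom n k (X x)) ∈ dehomIdeal n k := by
  have embedded (y : Rvars' n k) :
      X (embedVars n k y) - rename (embedVars n k) (dehom n k (X (embedVars n k y))) = 0 := by
    rw [dehom_X_embedVars, rename_X, sub_self]
  rcases x with p | q
  · cases p using Fin.cases with
    | zero =>
      rw [dehom_X_inl_zero, map_one]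
      exact Ideal.subset_span (Set.mem_insert _ _)
    | succ p => exact (embedded (Sum.inl p)).symm ▸ zero_mem _
  · cases q using Fin.cases with
    | zero =>
      rw [dehom_X_inr_zero, map_one]
      exact Ideal.subset_span (Set.mem_insert_of_mem _ rfl)
    | succ q => exact (embedded (Sum.inr q)).symm ▸ zero_mem _

theorem sub_rename_dehom_mem (g : Rpoly n k) :
    g - rename (embedVars n k) (dehom n k g) ∈ dehomIdeal n k := by
  have hcomp : ((Ideal.Quotient.mkₐ ℚ (dehomIdeal n k)).comp
      ((rename (embedVars n k)).comp (dehom n k))) = Ideal.Quotient.mkₐ ℚ (dehomIdeal n k) :=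
    MvPolynomial.algHom_ext fun x => Ideal.Quotient.eq.2 <|
      sub_mem_comm_iff.1 (X_sub_rename_dehom_X_mem x)
  rw [← Ideal.Quotient.eq, ← Ideal.Quotient.mkₐ_eq_mk ℚ]
  exact (congrArg (· g) hcomp).symm

theorem rename_dehom_mem_sup {I : Ideal (Rpoly n k)} {g : Rpoly n k} (hg : g ∈ I) :
    rename (embedVars n k) (dehom n k g) ∈ I ⊔ dehomIdeal n k := by
  rw [← sub_sub_cancel g (rename (embedVars n k) (dehom n k g))]
  exact sub_mem (Ideal.mem_sup_left hg) (Ideal.mem_sup_right (sub_rename_dehom_mem g))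

theorem exists_mem_dehom_eq_of_rename_mem_sup {I : Ideal (Rpoly n k)}
    {f : MvPolynomial (Rvars' n k) ℚ} (hf : rename (embedVars n k) f ∈ I ⊔ dehomIdeal n k) :
    ∃ h ∈ I, dehom n k h = f := by
  obtain ⟨h, hh, r, hr, hsum⟩ := Submodule.mem_sup.1 hf
  refine ⟨h, hh, ?_⟩
  have := congrArg (dehom n k) hsum
  rwa [map_add, dehomIdeal_le_ker hr, add_zero, dehom_rename] at this

theorem isWeightedHomogeneous_X_pow_mul {A B : ℕ} {m : ℕ × ℕ} {p : Rpoly n k}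
    (hp : IsWeightedHomogeneous (bw n k) p m) (hA : m.1 ≤ A) (hB : m.2 ≤ B) :
    IsWeightedHomogeneous (bw n k)
      (X (Sum.inl 0) ^ (A - m.1) * X (Sum.inr 0) ^ (B - m.2) * p) (A, B) := by
  have hX (x : Rvars n k) (s : ℕ) : IsWeightedHomogeneous (bw n k) (X x ^ s) (s • bw n k x) :=
    (isWeightedHomogeneous_X ℚ _ x).pow s
  convert ((hX (Sum.inl 0) (A - m.1)).mul (hX (Sum.inr 0) (B - m.2))).mul hp using 1
  simp [bw, Prod.ext_iff]
  omega

theorem exists_isWeightedHomogeneous_mem_dehom_eq {I : Ideal (Rpoly n k)} (hI : IsBihom n k I)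
    {h : Rpoly n k} (hh : h ∈ I) (i j : ℕ) :
    ∃ s t, ∃ H ∈ I, IsWeightedHomogeneous (bw n k) H (i + s, j + t) ∧
      dehom n k H = dehom n k h := by
  classical
  set S := (weightedHomogeneousComponent_finsupp (w := bw n k) (φ := h)).toFinset
  have hdecomp : ∑ m ∈ S, weightedHomogeneousComponent (bw n k) m h = h := by
    rw [← finsum_eq_sum _ (weightedHomogeneousComponent_finsupp h),
      sum_weightedHomogeneousComponent]
  set A := i + S.sup Prod.fst
  set B := j + S.sup Prod.snd
  refine ⟨S.sup Prod.fst, S.sup Prod.snd, ∑ m ∈ S, X (Sum.inl 0) ^ (A - m.1) *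
    X (Sum.inr 0) ^ (B - m.2) * weightedHomogeneousComponent (bw n k) m h, ?_, ?_, ?_⟩
  · exact Ideal.sum_mem _ fun m _ => Ideal.mul_mem_left _ _ (hI h hh m)
  · rw [← mem_weightedHomogeneousSubmodule]
    refine Submodule.sum_mem _ fun m hm =>
      isWeightedHomogeneous_X_pow_mul (weightedHomogeneousComponent_isWeightedHomogeneous _ _)
        ?_ ?_
    · exact (Finset.le_sup (f := Prod.fst) hm).trans (Nat.le_add_left _ _)
    · exact (Finset.le_sup (f := Prod.snd) hm).trans (Nat.le_add_left _ _)
  · conv_rhs => rw [← hdecomp]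
    simp

theorem phiH_mem_of_rename_mem_sup {I : Ideal (Rpoly n k)} (hI : IsBihom n k I)
    (hX0 : ∀ g : Rpoly n k, X (Sum.inl 0) * g ∈ I → g ∈ I)
    (hL0 : ∀ g : Rpoly n k, X (Sum.inr 0) * g ∈ I → g ∈ I)
    {i j : ℕ} {f : MvPolynomial (Rvars' n k) ℚ}
    (hi : weightedTotalDegree (wX' n k) f ≤ i) (hj : weightedTotalDegree (wL' n k) f ≤ j)
    (hf : rename (embedVars n k) f ∈ I ⊔ dehomIdeal n k) :
    phiH n k i j f ∈ I := by
  obtain ⟨h, hh, rfl⟩ := exists_mem_dehom_eq_of_rename_mem_sup hf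
  obtain ⟨s, t, H, hHI, hH, hdehom⟩ := exists_isWeightedHomogeneous_mem_dehom_eq hI hh i j
  have hpadded : X (Sum.inl 0) ^ s * (X (Sum.inr 0) ^ t * phiH n k i j (dehom n k h)) ∈ I := by
    rwa [← mul_assoc, ← phiH_add_add hi hj, ← hdehom, phiH_dehom hH]
  exact Ideal.mem_of_pow_mul_mem hL0 t (Ideal.mem_of_pow_mul_mem hX0 s hpadded)

end Bihomogenization

open Bihomogenization in
/-- If X₀ and ℓ₀ are non-zero-divisors mod a bi-homogeneous ideal I, then the
bi-homogenization to bidegree (i,j) of the dehomogenized ideal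
I′ = (I + ⟨X₀-1, ℓ₀-1⟩) ∩ ℚ[X₁,…,Xₙ,ℓ₁,…,ℓ_k] recovers exactly I_{i,j}. -/
theorem phi_dehomogenized_eq_graded_piece (n k : ℕ) (I : Ideal (Rpoly n k))
    (hI : IsBihom n k I)
    (hX0 : ∀ g : Rpoly n k, X (Sum.inl 0) * g ∈ I → g ∈ I)
    (hL0 : ∀ g : Rpoly n k, X (Sum.inr 0) * g ∈ I → g ∈ I)
    (i j : ℕ) :
    {g : Rpoly n k | ∃ f, f ∈ Ideal.comap (rename (embedVars n k))
        (I ⊔ Ideal.span {(X (Sum.inl 0) : Rpoly n k) - 1, (X (Sum.inr 0) : Rpoly n k) - 1}) ∧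
      weightedTotalDegree (wX' n k) f ≤ i ∧ weightedTotalDegree (wL' n k) f ≤ j ∧
      g = phiH n k i j f}
    = {g : Rpoly n k | g ∈ I ∧ IsWeightedHomogeneous (bw n k) g (i, j)} := by
  ext g
  constructor
  · rintro ⟨f, hf, hi, hj, rfl⟩
    exact ⟨phiH_mem_of_rename_mem_sup hI hX0 hL0 hi hj hf, isWeightedHomogeneous_phiH hi hj⟩
  · rintro ⟨hgI, hg⟩
    obtain ⟨hi, hj⟩ := weightedTotalDegree_dehom_le hg
    exact ⟨dehom n k g, rename_dehom_mem_sup hgI, hi, hj, (phiH_dehom hg).symm⟩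
end
end

section
/- Let I ⊆ R be a bi-homogeneous ideal and f₁,…,f_s bi-homogeneous polynomials of bidegrees (αᵢ,βᵢ) such that, setting Iᵢ = I + ⟨f₁,…,fᵢ⟩, the element f_{i+1} is a non-zero-divisor in R/Iᵢ for each i. Then the Hilbert bi-series of I_s equals (∏_{i=1}^{s}(1 − t₁^{αᵢ} t₂^{βᵢ})) · H(I), where H(I) is the Hilbert bi-series of I. -/
open MvPolynomial

noncomputable section

/-!
Let `f` be bihomogeneous of bidegree `d` and a non-zero-divisor modulo a bihomogeneous ideal `J`.
In every bidegree `e = i + d`, multiplication by `f` gives a short exact sequence of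
finite-dimensional spaces `0 → (R/J)ᵢ → (R/J)ₑ → (R/(J + ⟨f⟩))ₑ → 0`, while in a bidegree `e`
with `d ≰ e` the ideal `⟨f⟩` has no nonzero elements, so `(R/J)ₑ = (R/(J + ⟨f⟩))ₑ`. Comparing
coefficients, `H(J + ⟨f⟩) = (1 - t₁^{d₁} t₂^{d₂}) H(J)`, and the theorem follows by adding the
`fᵢ` one at a time.
-/

theorem finrank_eq_add_of_exact {K U V W : Type*} [DivisionRing K]
    [AddCommGroup U] [Module K U] [AddCommGroup V] [Module K V] [AddCommGroup W] [Module K W]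
    [FiniteDimensional K V] {μ : U →ₗ[K] V} {π : V →ₗ[K] W}
    (hμ : Function.Injective μ) (hπ : Function.Surjective π) (hexact : Function.Exact μ π) :
    Module.finrank K V = Module.finrank K W + Module.finrank K U := by
  rw [← π.finrank_range_add_finrank_ker, LinearMap.range_eq_top.mpr hπ, finrank_top,
    hexact.linearMap_ker_eq, LinearMap.finrank_range_of_inj hμ]

section GradedRing

variable {ι A σ : Type*} [DecidableEq ι] [CommRing A] [SetLike σ A] [AddSubmonoidClass σ A]
  (𝒜 : ι → σ)

theorem exists_sub_mul_mem_of_mem_sup_span_singleton [AddCancelCommMonoid ι] [GradedRing 𝒜]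
    {J : Ideal A} (hJ : J.IsHomogeneous 𝒜) {f x : A} {i d : ι} (hf : f ∈ 𝒜 d)
    (hx : x ∈ 𝒜 (i + d)) (h : x ∈ J ⊔ Ideal.span {f}) :
    ∃ g ∈ 𝒜 i, x - g * f ∈ J := by
  rw [sup_comm, Ideal.mem_span_singleton_sup] at h
  obtain ⟨a, b, hb, rfl⟩ := h
  refine ⟨DirectSum.decompose 𝒜 a i, SetLike.coe_mem _, ?_⟩
  rw [← DirectSum.decompose_of_mem_same 𝒜 hx, DirectSum.decompose_add,
    DirectSum.add_apply, AddMemClass.coe_add,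
    DirectSum.coe_decompose_mul_add_of_right_mem 𝒜 hf, add_sub_cancel_left]
  exact hJ (i + d) hb

theorem mem_of_mem_sup_span_singleton_of_not_le [AddCommMonoid ι] [PartialOrder ι]
    [CanonicallyOrderedAdd ι] [GradedRing 𝒜] {J : Ideal A} (hJ : J.IsHomogeneous 𝒜) {f x : A}
    {d e : ι} (hf : f ∈ 𝒜 d) (hx : x ∈ 𝒜 e) (hde : ¬ d ≤ e) (h : x ∈ J ⊔ Ideal.span {f}) :
    x ∈ J := by
  rw [sup_comm, Ideal.mem_span_singleton_sup] at h
  obtain ⟨a, b, hb, rfl⟩ := h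
  rw [← DirectSum.decompose_of_mem_same 𝒜 hx, DirectSum.decompose_add,
    DirectSum.add_apply, AddMemClass.coe_add,
    DirectSum.coe_decompose_mul_of_right_mem_of_not_le 𝒜 hf hde, zero_add]
  exact hJ e hb

end GradedRing

section GradedAlgebra

variable {ι K A : Type*} [Field K] [CommRing A] [Algebra K A] (𝒜 : ι → Submodule K A)

/-- `𝒜 i ⧸ J.gradedPart 𝒜 i` is the degree-`i` part of `A ⧸ J`. -/
def Ideal.gradedPart (J : Ideal A) (i : ι) : Submodule K (𝒜 i) :=
  (J.restrictScalars K).comap (𝒜 i).subtype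

theorem Ideal.mem_gradedPart {J : Ideal A} {i : ι} {x : 𝒜 i} :
    x ∈ J.gradedPart 𝒜 i ↔ (x : A) ∈ J :=
  Iff.rfl

theorem Ideal.gradedPart_mono {J J' : Ideal A} (h : J ≤ J') (i : ι) :
    J.gradedPart 𝒜 i ≤ J'.gradedPart 𝒜 i :=
  fun _ hx => h hx

theorem gradedPart_sup_span_singleton_of_not_le [DecidableEq ι] [AddCommMonoid ι]
    [PartialOrder ι] [CanonicallyOrderedAdd ι] [GradedAlgebra 𝒜] {J : Ideal A}
    (hJ : J.IsHomogeneous 𝒜) {f : A} {d e : ι} (hf : f ∈ 𝒜 d) (hde : ¬ d ≤ e) :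
    (J ⊔ Ideal.span {f}).gradedPart 𝒜 e = J.gradedPart 𝒜 e :=
  le_antisymm (fun x hx => mem_of_mem_sup_span_singleton_of_not_le 𝒜 hJ hf x.2 hde hx)
    (J.gradedPart_mono 𝒜 le_sup_left e)

def quotientGradedPartMulRight [DecidableEq ι] [AddMonoid ι] [GradedAlgebra 𝒜] (J : Ideal A)
    {f : A} {d : ι} (hf : f ∈ 𝒜 d) (i : ι) :
    𝒜 i ⧸ J.gradedPart 𝒜 i →ₗ[K] 𝒜 (i + d) ⧸ J.gradedPart 𝒜 (i + d) :=
  Submodule.mapQ _ _ ((LinearMap.mulRight K f).restrict fun _ hx => SetLike.GradedMul.mul_mem hx hf)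
    fun _ hx => J.mul_mem_right f hx

theorem quotientGradedPartMulRight_mk [DecidableEq ι] [AddMonoid ι] [GradedAlgebra 𝒜]
    (J : Ideal A) {f : A} {d : ι} (hf : f ∈ 𝒜 d) {i : ι} (x : 𝒜 i) :
    quotientGradedPartMulRight 𝒜 J hf i (Submodule.Quotient.mk x) =
      Submodule.Quotient.mk ⟨x * f, SetLike.GradedMul.mul_mem x.2 hf⟩ :=
  rfl

theorem quotientGradedPartMulRight_injective [DecidableEq ι] [AddMonoid ι] [GradedAlgebra 𝒜]
    {J : Ideal A} {f : A} {d : ι} (hf : f ∈ 𝒜 d) (hreg : ∀ g, g * f ∈ J → g ∈ J) (i : ι) :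
    Function.Injective (quotientGradedPartMulRight 𝒜 J hf i) := by
  rw [← LinearMap.ker_eq_bot, eq_bot_iff]
  rintro q hq
  obtain ⟨x, rfl⟩ := Submodule.Quotient.mk_surjective _ q
  rw [LinearMap.mem_ker, quotientGradedPartMulRight_mk, Submodule.Quotient.mk_eq_zero] at hq
  rw [Submodule.mem_bot, Submodule.Quotient.mk_eq_zero]
  exact hreg _ hq

theorem exact_quotientGradedPartMulRight_factor [DecidableEq ι] [AddCancelCommMonoid ι]
    [GradedAlgebra 𝒜] {J : Ideal A} (hJ : J.IsHomogeneous 𝒜) {f : A} {d : ι} (hf : f ∈ 𝒜 d)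
    (i : ι) :
    Function.Exact (quotientGradedPartMulRight 𝒜 J hf i)
      (Submodule.factor (J.gradedPart_mono 𝒜 (le_sup_left : J ≤ J ⊔ Ideal.span {f}) (i + d))) := by
  intro q
  obtain ⟨x, rfl⟩ := Submodule.Quotient.mk_surjective _ q
  rw [Submodule.factor, Submodule.mapQ_apply, LinearMap.id_apply, Submodule.Quotient.mk_eq_zero,
    Ideal.mem_gradedPart]
  constructor
  · intro hx
    obtain ⟨g, hg, hgx⟩ := exists_sub_mul_mem_of_mem_sup_span_singleton 𝒜 hJ hf x.2 hx
    refine ⟨Submodule.Quotient.mk ⟨g, hg⟩, ?_⟩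
    rw [quotientGradedPartMulRight_mk, Submodule.Quotient.eq, Ideal.mem_gradedPart]
    simpa using J.neg_mem hgx
  · rintro ⟨p, hp⟩
    obtain ⟨g, rfl⟩ := Submodule.Quotient.mk_surjective _ p
    rw [quotientGradedPartMulRight_mk, Submodule.Quotient.eq, Ideal.mem_gradedPart] at hp
    have hgf : (g : A) * f ∈ J ⊔ Ideal.span {f} :=
      Ideal.mem_sup_right (Ideal.mul_mem_left _ _ (Ideal.mem_span_singleton_self f))
    simpa using sub_mem hgf (Ideal.mem_sup_left hp)

theorem finrank_quotient_gradedPart_eq_add [DecidableEq ι] [AddCancelCommMonoid ι]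
    [GradedAlgebra 𝒜] {J : Ideal A} (hJ : J.IsHomogeneous 𝒜) {f : A} {d : ι} (hf : f ∈ 𝒜 d)
    (hreg : ∀ g, g * f ∈ J → g ∈ J) (i : ι) [FiniteDimensional K (𝒜 (i + d))] :
    Module.finrank K (𝒜 (i + d) ⧸ J.gradedPart 𝒜 (i + d)) =
      Module.finrank K (𝒜 (i + d) ⧸ (J ⊔ Ideal.span {f}).gradedPart 𝒜 (i + d)) +
        Module.finrank K (𝒜 i ⧸ J.gradedPart 𝒜 i) :=
  finrank_eq_add_of_exact (quotientGradedPartMulRight_injective 𝒜 hf hreg i)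
    (Submodule.factor_surjective _) (exact_quotientGradedPartMulRight_factor 𝒜 hJ hf i)

end GradedAlgebra

def biseries (a : ℕ × ℕ → ℕ) : MvPowerSeries (Fin 2) ℤ :=
  fun m => (a (m 0, m 1) : ℤ)

theorem coeff_biseries (a : ℕ × ℕ → ℕ) (m : Fin 2 →₀ ℕ) :
    MvPowerSeries.coeff m (biseries a) = a (m 0, m 1) :=
  rfl

theorem biseries_eq_one_sub_mul (a b : ℕ × ℕ → ℕ) (d : ℕ × ℕ)
    (hadd : ∀ i, b (i + d) = a (i + d) + b i) (hnle : ∀ e, ¬ d ≤ e → a e = b e) :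
    biseries a = (1 - MvPowerSeries.X 0 ^ d.1 * MvPowerSeries.X 1 ^ d.2) * biseries b := by
  set δ : Fin 2 →₀ ℕ := Finsupp.single 0 d.1 + Finsupp.single 1 d.2
  have hX : (MvPowerSeries.X 0 ^ d.1 * MvPowerSeries.X 1 ^ d.2 : MvPowerSeries (Fin 2) ℤ) =
      MvPowerSeries.monomial δ 1 := by
    rw [MvPowerSeries.X_pow_eq, MvPowerSeries.X_pow_eq, MvPowerSeries.monomial_mul_monomial,
      one_mul]
  have hδ : (δ 0, δ 1) = d := by simp [δ]
  refine MvPowerSeries.ext fun m => ?_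
  rw [hX, sub_mul, one_mul, map_sub, MvPowerSeries.coeff_monomial_mul, one_mul]
  split_ifs with h
  · obtain ⟨i, rfl⟩ := exists_add_of_le h
    have hm : ((δ + i) 0, (δ + i) 1) = (i 0, i 1) + d := by
      rw [← hδ]
      exact Prod.ext (add_comm _ _) (add_comm _ _)
    rw [add_tsub_cancel_left, coeff_biseries, coeff_biseries, coeff_biseries, hm, hadd]
    push_cast
    ring
  · have hdm : ¬ d ≤ (m 0, m 1) := by
      refine fun hle => h (Finsupp.le_def.mpr (Fin.forall_fin_two.mpr ⟨?_, ?_⟩))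
      · simpa [δ] using hle.1
      · simpa [δ] using hle.2
    rw [coeff_biseries, coeff_biseries, hnle _ hdm, sub_zero]

section Bigraded

variable {n k : ℕ}

attribute [local instance] weightedGradedAlgebra

theorem weight_bw_fst_add_snd (m : Rvars n k →₀ ℕ) :
    (Finsupp.weight (bw n k) m).1 + (Finsupp.weight (bw n k) m).2 = Finsupp.weight 1 m := by
  simp only [Finsupp.weight_eq_sum, Prod.fst_sum, Prod.snd_sum, ← Finset.sum_add_distrib]
  refine Finset.sum_congr rfl fun i _ => ?_
  cases i <;> simp [bw]

instance (e : ℕ × ℕ) : FiniteDimensional ℚ (weightedHomogeneousSubmodule ℚ (bw n k) e) := by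
  have : FiniteDimensional ℚ (homogeneousSubmodule (Rvars n k) ℚ (e.1 + e.2)) :=
    Module.Finite.iff_fg.mpr (homogeneousSubmodule_fg _ _ _)
  refine Submodule.finiteDimensional_of_le (S₂ := homogeneousSubmodule _ ℚ (e.1 + e.2))
    fun p hp m hm => ?_
  rw [← weight_bw_fst_add_snd, hp hm]

theorem isBihom_iff_isHomogeneous (J : Ideal (Rpoly n k)) :
    IsBihom n k J ↔ J.IsHomogeneous (weightedHomogeneousSubmodule ℚ (bw n k)) := by
  have hdec (r : Rpoly n k) (i : ℕ × ℕ) :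
      (DirectSum.decompose (weightedHomogeneousSubmodule ℚ (bw n k)) r i : Rpoly n k) =
        weightedHomogeneousComponent (bw n k) i r :=
    decompose'_apply ℚ _ r i
  refine ⟨fun h i r hr => ?_, fun h r hr i => ?_⟩
  · rw [hdec]; exact h r hr i
  · rw [← hdec]; exact h i hr

theorem Hseries_eq_biseries (J : Ideal (Rpoly n k)) : Hseries n k J = biseries (Hcoeff n k J) :=
  rfl

theorem Hcoeff_eq_finrank (J : Ideal (Rpoly n k)) (e : ℕ × ℕ) :
    Hcoeff n k J e = Module.finrank ℚ (weightedHomogeneousSubmodule ℚ (bw n k) e ⧸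
      J.gradedPart (weightedHomogeneousSubmodule ℚ (bw n k)) e) :=
  rfl

theorem IsBihom.sup_span {J : Ideal (Rpoly n k)} (hJ : IsBihom n k J) {S : Set (Rpoly n k)}
    (hS : ∀ x ∈ S, ∃ d, IsWeightedHomogeneous (bw n k) x d) :
    IsBihom n k (J ⊔ Ideal.span S) := by
  rw [isBihom_iff_isHomogeneous] at hJ ⊢
  exact hJ.sup (Ideal.homogeneous_span _ S hS)

theorem Hseries_sup_span_singleton {J : Ideal (Rpoly n k)} (hJ : IsBihom n k J)
    {f : Rpoly n k} {d : ℕ × ℕ} (hf : IsWeightedHomogeneous (bw n k) f d)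
    (hreg : ∀ g, g * f ∈ J → g ∈ J) :
    Hseries n k (J ⊔ Ideal.span {f}) =
      (1 - MvPowerSeries.X 0 ^ d.1 * MvPowerSeries.X 1 ^ d.2) * Hseries n k J := by
  rw [isBihom_iff_isHomogeneous] at hJ
  rw [Hseries_eq_biseries, Hseries_eq_biseries]
  refine biseries_eq_one_sub_mul _ _ d (fun i => ?_) fun e hde => ?_
  · simpa only [Hcoeff_eq_finrank] using finrank_quotient_gradedPart_eq_add _ hJ hf hreg i
  · rw [Hcoeff_eq_finrank, Hcoeff_eq_finrank, gradedPart_sup_span_singleton_of_not_le _ hJ hf hde]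

theorem Hseries_sup_span_image_lt {s : ℕ} {I : Ideal (Rpoly n k)} (hI : IsBihom n k I)
    {f : Fin s → Rpoly n k} {db : Fin s → ℕ × ℕ}
    (hf : ∀ i, IsWeightedHomogeneous (bw n k) (f i) (db i))
    (hreg : ∀ i : Fin s, ∀ g : Rpoly n k,
      g * f i ∈ I ⊔ Ideal.span (f '' {j | j < i}) → g ∈ I ⊔ Ideal.span (f '' {j | j < i}))
    {m : ℕ} (hm : m ≤ s) :
    Hseries n k (I ⊔ Ideal.span (f '' {j | (j : ℕ) < m})) =
      (∏ i ∈ Finset.univ.filter (fun i : Fin s => (i : ℕ) < m),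
        (1 - MvPowerSeries.X 0 ^ (db i).1 * MvPowerSeries.X 1 ^ (db i).2)) * Hseries n k I := by
  induction m with
  | zero => simp
  | succ m ih =>
    let i : Fin s := ⟨m, hm⟩
    have hset : {j : Fin s | (j : ℕ) < m + 1} = insert i {j | j < i} := by
      ext j
      simp only [Set.mem_ofPred_eq, Set.mem_insert_iff, Fin.ext_iff, Fin.lt_def, i]
      omega
    have hfinset : Finset.univ.filter (fun j : Fin s => (j : ℕ) < m + 1) =
        insert i (Finset.univ.filter fun j : Fin s => (j : ℕ) < m) := by
      ext j
      simp only [Finset.mem_filter, Finset.mem_univ, true_and, Finset.mem_insert, Fin.ext_iff, i]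
      omega
    have hbihom : IsBihom n k (I ⊔ Ideal.span (f '' {j | j < i})) :=
      hI.sup_span (by rintro _ ⟨j, -, rfl⟩; exact ⟨db j, hf j⟩)
    rw [hset, Set.image_insert_eq, Ideal.span_insert, sup_left_comm, sup_comm,
      Hseries_sup_span_singleton hbihom (hf i) (hreg i), hfinset,
      Finset.prod_insert (by simp [i]), mul_assoc]
    exact congrArg _ (ih (Nat.le_of_succ_le hm))

end Bigraded

/-- Adding to a bi-homogeneous ideal a sequence of bi-homogeneous non-zero-divisors
of bidegrees (αᵢ,βᵢ) multiplies the Hilbert bi-series by ∏(1 - t₁^{αᵢ} t₂^{βᵢ}). -/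
theorem hilbert_biseries_regular_sequence (n k s : ℕ) (I : Ideal (Rpoly n k))
    (hI : IsBihom n k I) (f : Fin s → Rpoly n k) (db : Fin s → ℕ × ℕ)
    (hf : ∀ i, IsWeightedHomogeneous (bw n k) (f i) (db i))
    (hreg : ∀ i : Fin s, ∀ g : Rpoly n k,
      g * f i ∈ I ⊔ Ideal.span (f '' {j | j < i}) →
      g ∈ I ⊔ Ideal.span (f '' {j | j < i})) :
    Hseries n k (I ⊔ Ideal.span (Set.range f)) =
      (∏ i : Fin s,
        (1 - MvPowerSeries.X 0 ^ (db i).1 * MvPowerSeries.X 1 ^ (db i).2)) *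
        Hseries n k I := by
  simpa using Hseries_sup_span_image_lt hI hf hreg le_rfl
end
end

section
/- Let I be a bi-homogeneous ideal of R with a minimal bi-homogeneous primary decomposition, and let 𝒳 be the intersection of those primary components containing a power of ⟨X₀,…,Xₙ⟩, 𝓛 the intersection of those containing a power of ⟨ℓ₀,…,ℓ_k⟩, and J the intersection of the remaining (admissible) components. Then there exist (i₀,j₀) such that for all i ≥ i₀ and j ≥ j₀, I_{i,j} = J_{i,j}, and hence dim(R_{i,j}/I_{i,j}) = dim(R_{i,j}/J_{i,j}). -/
open MvPolynomial

noncomputable section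

lemma monomial_mem_pow_span (n k : ℕ) (f : Fin (n+1) ⊕ Fin (k+1) → Bool)
    (N : ℕ) (m : Rvars n k →₀ ℕ) (c : ℚ)
    (hN : N ≤ (Finsupp.weight (fun v => cond (f v) 1 0) m : ℕ)) :
    (monomial m c : Rpoly n k) ∈
      (Ideal.span (Set.range fun v : {v // f v = true} => (X v.1 : Rpoly n k))) ^ N := by
  induction N generalizing m with
  | zero => simp
  | succ N ih =>
    set w : Rvars n k → ℕ := fun v => cond (f v) 1 0 with hw
    have hpos : 0 < (Finsupp.weight w m : ℕ) := lt_of_lt_of_le (Nat.succ_pos N) hN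
    have : ∃ v, f v = true ∧ m v ≠ 0 := by
      by_contra h
      push_neg at h
      have : (Finsupp.weight w m : ℕ) = 0 := by
        rw [Finsupp.weight_apply, Finsupp.sum]
        apply Finset.sum_eq_zero
        intro v hv
        rcases Bool.eq_false_or_eq_true (f v) with hf | hf
        · simp [h v hf]
        · simp [hw, hf]
      omega
    obtain ⟨v, hfv, hmv⟩ := this
    have hle : Finsupp.single v 1 ≤ m := Finsupp.single_le_iff.mpr (Nat.one_le_iff_ne_zero.mpr hmv)
    have hdecomp : Finsupp.single v 1 + (m - Finsupp.single v 1) = m := by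
      rw [add_comm]; exact tsub_add_cancel_of_le hle
    have hwsub : N ≤ (Finsupp.weight w (m - Finsupp.single v 1) : ℕ) := by
      have := congrArg (fun x => (Finsupp.weight w x : ℕ)) hdecomp
      simp only [map_add] at this
      have hws : (Finsupp.weight w (Finsupp.single v 1) : ℕ) = 1 := by
        rw [Finsupp.weight_apply, Finsupp.sum_single_index] <;> simp [hw, hfv]
      omega
    have hmem : (monomial (m - Finsupp.single v 1) c : Rpoly n k) ∈
        (Ideal.span (Set.range fun v : {v // f v = true} => (X v.1 : Rpoly n k))) ^ N :=
      ih _ hwsub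
    have hX : (X v : Rpoly n k) ∈
        Ideal.span (Set.range fun v : {v // f v = true} => (X v.1 : Rpoly n k)) :=
      Ideal.subset_span ⟨⟨v, hfv⟩, rfl⟩
    have heq : (monomial m c : Rpoly n k)
        = X v * monomial (m - Finsupp.single v 1) c := by
      rw [← pow_one (X v : Rpoly n k), ← monomial_single_add, hdecomp]
    rw [heq, pow_succ']
    exact Ideal.mul_mem_mul hX hmem

lemma homog_mem_pow_left (n k N i j : ℕ) (g : Rpoly n k)
    (hg : IsWeightedHomogeneous (bw n k) g (i, j)) (hN : N ≤ i) :
    g ∈ (Ideal.span (Set.range fun p : Fin (n+1) => (X (Sum.inl p) : Rpoly n k))) ^ N := by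
  classical
  have hrange : (Set.range fun p : Fin (n+1) => (X (Sum.inl p) : Rpoly n k))
      = Set.range fun v : {v : Rvars n k // v.isLeft = true} => (X v.1 : Rpoly n k) := by
    ext y
    constructor
    · rintro ⟨p, rfl⟩; exact ⟨⟨Sum.inl p, rfl⟩, rfl⟩
    · rintro ⟨⟨v, hv⟩, rfl⟩
      rcases v with p | q
      · exact ⟨p, rfl⟩
      · simp at hv
  rw [hrange]
  rw [as_sum g]
  apply Submodule.sum_mem
  intro m hm
  apply monomial_mem_pow_span
  beta_reduce
  have hcoeff : coeff m g ≠ 0 := mem_support_iff.mp hm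
  have hwm : Finsupp.weight (bw n k) m = (i, j) := hg hcoeff
  have hfst : (Finsupp.weight (fun v : Rvars n k =>
      cond v.isLeft 1 0) m : ℕ) = (Finsupp.weight (bw n k) m).1 := by
    rw [Finsupp.weight_apply, Finsupp.weight_apply, Finsupp.sum, Finsupp.sum, Prod.fst_sum]
    apply Finset.sum_congr rfl
    intro v _
    rcases v with p | q <;> simp [bw]
  convert hN using 1
  exact hfst.trans (by rw [hwm])

lemma homog_mem_pow_right (n k N i j : ℕ) (g : Rpoly n k)
    (hg : IsWeightedHomogeneous (bw n k) g (i, j)) (hN : N ≤ j) :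
    g ∈ (Ideal.span (Set.range fun q : Fin (k+1) => (X (Sum.inr q) : Rpoly n k))) ^ N := by
  classical
  have hrange : (Set.range fun q : Fin (k+1) => (X (Sum.inr q) : Rpoly n k))
      = Set.range fun v : {v : Rvars n k // v.isRight = true} => (X v.1 : Rpoly n k) := by
    ext y
    constructor
    · rintro ⟨q, rfl⟩; exact ⟨⟨Sum.inr q, rfl⟩, rfl⟩
    · rintro ⟨⟨v, hv⟩, rfl⟩
      rcases v with p | q
      · simp at hv
      · exact ⟨q, rfl⟩
  rw [hrange]
  rw [as_sum g]
  apply Submodule.sum_mem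
  intro m hm
  apply monomial_mem_pow_span
  beta_reduce
  have hcoeff : coeff m g ≠ 0 := mem_support_iff.mp hm
  have hwm : Finsupp.weight (bw n k) m = (i, j) := hg hcoeff
  have hsnd : (Finsupp.weight (fun v : Rvars n k =>
      cond v.isRight 1 0) m : ℕ) = (Finsupp.weight (bw n k) m).2 := by
    rw [Finsupp.weight_apply, Finsupp.weight_apply, Finsupp.sum, Finsupp.sum, Prod.snd_sum]
    apply Finset.sum_congr rfl
    intro v _
    rcases v with p | q <;> simp [bw]
  convert hN using 1
  exact hsnd.trans (by rw [hwm])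

/-- Dropping from a minimal bi-homogeneous primary decomposition of I the
non-admissible components (those containing a power of ⟨X₀,…,Xₙ⟩ or of
⟨ℓ₀,…,ℓ_k⟩) does not change the graded pieces of large enough bidegree. -/
theorem graded_pieces_eq_admissible_part (n k : ℕ) (I : Ideal (Rpoly n k))
    (s : Finset (Ideal (Rpoly n k)))
    (hprim : ∀ Q ∈ s, Q.IsPrimary)
    (hbh : ∀ Q ∈ s, IsBihom n k Q)
    (hdec : I = sInf (s : Set (Ideal (Rpoly n k))))
    (hradinj : Set.InjOn Ideal.radical (s : Set (Ideal (Rpoly n k))))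
    (hmin : ∀ Q ∈ s, ¬ sInf ((s : Set (Ideal (Rpoly n k))) \ {Q}) ≤ Q) :
    ∃ i₀ j₀ : ℕ, ∀ i j : ℕ, i₀ ≤ i → j₀ ≤ j →
      (∀ g : Rpoly n k, IsWeightedHomogeneous (bw n k) g (i, j) →
        (g ∈ I ↔ g ∈ sInf {Q | Q ∈ s ∧
          (¬ ∃ N : ℕ, (Ideal.span (Set.range fun p : Fin (n+1) =>
              (X (Sum.inl p) : Rpoly n k))) ^ N ≤ Q) ∧
          (¬ ∃ N : ℕ, (Ideal.span (Set.range fun q : Fin (k+1) =>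
              (X (Sum.inr q) : Rpoly n k))) ^ N ≤ Q)})) ∧
      Hcoeff n k I (i, j) =
        Hcoeff n k (sInf {Q | Q ∈ s ∧
          (¬ ∃ N : ℕ, (Ideal.span (Set.range fun p : Fin (n+1) =>
              (X (Sum.inl p) : Rpoly n k))) ^ N ≤ Q) ∧
          (¬ ∃ N : ℕ, (Ideal.span (Set.range fun q : Fin (k+1) =>
              (X (Sum.inr q) : Rpoly n k))) ^ N ≤ Q)}) (i, j) := by
  classical
  set XI : Ideal (Rpoly n k) :=
    Ideal.span (Set.range fun p : Fin (n+1) => (X (Sum.inl p) : Rpoly n k)) with hXI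
  set LI : Ideal (Rpoly n k) :=
    Ideal.span (Set.range fun q : Fin (k+1) => (X (Sum.inr q) : Rpoly n k)) with hLI
  set J : Ideal (Rpoly n k) := sInf {Q | Q ∈ s ∧
      (¬ ∃ N : ℕ, XI ^ N ≤ Q) ∧ (¬ ∃ N : ℕ, LI ^ N ≤ Q)} with hJ
  set F : Ideal (Rpoly n k) → ℕ :=
    fun Q => if h : ∃ N : ℕ, XI ^ N ≤ Q then h.choose else 0 with hF
  set G : Ideal (Rpoly n k) → ℕ :=
    fun Q => if h : ∃ N : ℕ, LI ^ N ≤ Q then h.choose else 0 with hG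
  refine ⟨s.sup F, s.sup G, fun i j hi hj => ?_⟩
  have key : ∀ g : Rpoly n k, IsWeightedHomogeneous (bw n k) g (i, j) → (g ∈ I ↔ g ∈ J) := by
    intro g hg
    constructor
    · intro hgI
      rw [hJ, Ideal.mem_sInf]
      rintro Q ⟨hQs, -, -⟩
      rw [hdec, Ideal.mem_sInf] at hgI
      exact hgI hQs
    · intro hgJ
      rw [hdec, Ideal.mem_sInf]
      intro Q hQs
      rcases Classical.em (∃ N : ℕ, XI ^ N ≤ Q) with hx | hx
      · have hNle : F Q ≤ i := le_trans (Finset.le_sup hQs) hi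
        have hpow : XI ^ F Q ≤ Q := by
          rw [hF]; simp only [hx, dif_pos]; exact hx.choose_spec
        apply hpow
        apply Ideal.pow_le_pow_right hNle
        exact homog_mem_pow_left n k i i j g hg le_rfl
      rcases Classical.em (∃ N : ℕ, LI ^ N ≤ Q) with hl | hl
      · have hNle : G Q ≤ j := le_trans (Finset.le_sup hQs) hj
        have hpow : LI ^ G Q ≤ Q := by
          rw [hG]; simp only [hl, dif_pos]; exact hl.choose_spec
        apply hpow
        apply Ideal.pow_le_pow_right hNle
        exact homog_mem_pow_right n k j i j g hg le_rfl
      · rw [hJ, Ideal.mem_sInf] at hgJ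
        exact hgJ ⟨hQs, hx, hl⟩
  refine ⟨key, ?_⟩
  have hsub : (Submodule.comap (weightedHomogeneousSubmodule ℚ (bw n k) (i, j)).subtype
        (Submodule.restrictScalars ℚ I))
      = (Submodule.comap (weightedHomogeneousSubmodule ℚ (bw n k) (i, j)).subtype
        (Submodule.restrictScalars ℚ J)) := by
    ext ⟨p, hp⟩
    simp only [Submodule.mem_comap, Submodule.coe_subtype, Submodule.restrictScalars_mem]
    exact key p (mem_weightedHomogeneousSubmodule ℚ (bw n k) (i, j) p |>.mp hp)
  unfold Hcoeff
  rw [hsub]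

end
end

section
/- For all integers D ≥ 2, n ≥ 1, and 1 ≤ s ≤ n−1, the quantity D^s · ∑_{i=0}^{n−s} (D−1)^{n−s−i} · C(n−1−i, n−i−s) is less than or equal to the Thom–Milnor bound D·(2D−1)^{n−1}. -/
/-- The bound D^s ∑_{i=0}^{n-s} (D-1)^{n-s-i} C(n-1-i, n-i-s) on the number of
connected components of a smooth real algebraic set defined by a regular sequence
is at most the Thom–Milnor bound D(2D-1)^{n-1}. -/
theorem bound_le_thom_milnor (D n s : ℕ) (hD : 2 ≤ D) (hn : 1 ≤ n)
    (hs : 1 ≤ s) (hsn : s ≤ n - 1) :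
    D ^ s * ∑ i ∈ Finset.range (n - s + 1),
        (D - 1) ^ (n - s - i) * Nat.choose (n - 1 - i) (n - i - s)
      ≤ D * (2 * D - 1) ^ (n - 1) := by
  set m := n - s with hm
  have h1 : ∑ i ∈ Finset.range (m + 1),
      (D - 1) ^ (m - i) * Nat.choose (n - 1 - i) (n - i - s)
      = ∑ j ∈ Finset.range (m + 1), (D - 1) ^ j * Nat.choose (s - 1 + j) j := by
    rw [← Finset.sum_range_reflect (fun j => (D - 1) ^ j * Nat.choose (s - 1 + j) j) (m + 1)]
    apply Finset.sum_congr rfl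
    intro i hi
    simp only [Finset.mem_range] at hi
    have h2 : m + 1 - 1 - i = m - i := by omega
    have h3 : n - 1 - i = s - 1 + (m - i) := by omega
    have h4 : n - i - s = m - i := by omega
    rw [h2, h3, h4]
  rw [h1, Finset.mul_sum]
  have key : ∀ j ∈ Finset.range (m + 1),
      D ^ s * ((D - 1) ^ j * Nat.choose (s - 1 + j) j)
      ≤ D * ((D - 1) ^ j * D ^ (n - 1 - j) * Nat.choose (n - 1) j) := by
    intro j hj
    simp only [Finset.mem_range] at hj
    have hc : Nat.choose (s - 1 + j) j ≤ Nat.choose (n - 1) j :=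
      Nat.choose_le_choose j (by omega)
    have hD' : D ^ s ≤ D * D ^ (n - 1 - j) := by
      rw [← pow_succ']
      exact Nat.pow_le_pow_right (by omega) (by omega)
    calc D ^ s * ((D - 1) ^ j * Nat.choose (s - 1 + j) j)
        ≤ (D * D ^ (n - 1 - j)) * ((D - 1) ^ j * Nat.choose (n - 1) j) :=
          Nat.mul_le_mul hD' (Nat.mul_le_mul_left _ hc)
      _ = D * ((D - 1) ^ j * D ^ (n - 1 - j) * Nat.choose (n - 1) j) := by ring
  calc ∑ j ∈ Finset.range (m + 1), D ^ s * ((D - 1) ^ j * Nat.choose (s - 1 + j) j)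
      ≤ ∑ j ∈ Finset.range (m + 1),
          D * ((D - 1) ^ j * D ^ (n - 1 - j) * Nat.choose (n - 1) j) :=
        Finset.sum_le_sum key
    _ ≤ ∑ j ∈ Finset.range (n - 1 + 1),
          D * ((D - 1) ^ j * D ^ (n - 1 - j) * Nat.choose (n - 1) j) :=
        Finset.sum_le_sum_of_subset (Finset.range_subset_range.mpr (by omega))
    _ = D * (2 * D - 1) ^ (n - 1) := by
        rw [← Finset.mul_sum]
        congr 1
        have h5 : 2 * D - 1 = (D - 1) + D := by omega
        rw [h5, add_pow]
        simp
end
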